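/- Let ξ be an element of the 0-Hecke algebra of a Coxeter group that is a symmetric linear combination of the generators T_i (e.g., ξ = (1/r)∑_i T_i). Then for every N ≥ 0 and every group element x, the coefficient of T_x in ξ^N equals the coefficient of T_{x⁻¹} in ξ^N. -/

import Mathlib

/-!
Let `ι` be the linear map `T_x ↦ T_{x⁻¹}`. Since `ℓ (s x⁻¹) = ℓ (x s)` and `ℓ (x⁻¹) = ℓ x`, the
right action of a generator `T_s` on `T_x` mirrors its left action on `T_{x⁻¹}`, so
`ι (a * T_s) = T_s * ι a` for all `a`. Hence `ι (a * ξ) = ξ * ι a` for every linear combination `ξ`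
of the generators, and induction on `N` gives `ι (ξ ^ N) = ξ ^ N`. Comparing coefficients of `T_x`
on both sides gives the claim.
-/

namespace Module.Basis

variable {W R K : Type*} [Group W] [Semiring R] [AddCommMonoid K] [Module R K]
  (b : Basis W R K)

noncomputable def invMap : K ≃ₗ[R] K := b.equiv b (Equiv.inv W)

@[simp]
lemma invMap_self (x : W) : b.invMap (b x) = b x⁻¹ :=
  b.equiv_apply x b _

lemma repr_invMap_apply (a : K) (x : W) : b.repr (b.invMap a) x = b.repr a x⁻¹ := by
  have hmaps : Finsupp.lapply x ∘ₗ b.repr.toLinearMap ∘ₗ b.invMap.toLinearMap =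
      Finsupp.lapply x⁻¹ ∘ₗ b.repr.toLinearMap :=
    b.ext fun y => by
      classical
      simp only [LinearMap.comp_apply, LinearEquiv.coe_coe, invMap_self, repr_self,
        Finsupp.lapply_apply, Finsupp.single_apply, inv_eq_iff_eq_inv]
  exact LinearMap.congr_fun hmaps a

end Module.Basis

lemma apply_pow_eq_pow_of_apply_mul {K : Type*} [Monoid K] (φ : K → K) (ξ : K) (h1 : φ 1 = 1)
    (hξ : ∀ a, φ (a * ξ) = ξ * φ a) (N : ℕ) : φ (ξ ^ N) = ξ ^ N := by
  induction N with
  | zero => simpa using h1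
  | succ N ih => rw [pow_succ, hξ, ih, pow_mul_comm']

namespace CoxeterSystem

variable {B W : Type*} [Group W] {M : CoxeterMatrix B} (cs : CoxeterSystem M W)

lemma length_simple_mul_inv (i : B) (x : W) :
    cs.length (cs.simple i * x⁻¹) = cs.length (x * cs.simple i) := by
  rw [← cs.length_inv, mul_inv_rev, inv_inv, cs.inv_simple]

variable {R K : Type*} [Semiring R] [Semiring K] [Module R K] [IsScalarTower R K K]
  [SMulCommClass R K K] (b : Module.Basis W R K)

lemma invMap_mul_simple
    (hleft : ∀ (i : B) (x : W), cs.length (cs.simple i * x) > cs.length x →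
      b (cs.simple i) * b x = b (cs.simple i * x))
    (hleft' : ∀ (i : B) (x : W), ¬ cs.length (cs.simple i * x) > cs.length x →
      b (cs.simple i) * b x = b x)
    (hright : ∀ (i : B) (x : W), cs.length (x * cs.simple i) > cs.length x →
      b x * b (cs.simple i) = b (x * cs.simple i))
    (hright' : ∀ (i : B) (x : W), ¬ cs.length (x * cs.simple i) > cs.length x →
      b x * b (cs.simple i) = b x)
    (i : B) (a : K) :
    b.invMap (a * b (cs.simple i)) = b (cs.simple i) * b.invMap a := by
  have hmaps : b.invMap.toLinearMap ∘ₗ LinearMap.mulRight R (b (cs.simple i)) =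
      LinearMap.mulLeft R (b (cs.simple i)) ∘ₗ b.invMap.toLinearMap := by
    refine b.ext fun x => ?_
    have hlen := cs.length_simple_mul_inv i x
    have hlen_inv := cs.length_inv x
    simp only [LinearMap.comp_apply, LinearMap.mulRight_apply, LinearMap.mulLeft_apply,
      LinearEquiv.coe_coe, Module.Basis.invMap_self]
    by_cases h : cs.length (x * cs.simple i) > cs.length x
    · rw [hright i x h, hleft i x⁻¹ (by omega), Module.Basis.invMap_self, mul_inv_rev,
        cs.inv_simple]
    · rw [hright' i x h, hleft' i x⁻¹ (by omega), Module.Basis.invMap_self]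
  exact LinearMap.congr_fun hmaps a

end CoxeterSystem

/-- In the 0-Hecke algebra of a Coxeter group over ℚ, let
`ξ = (1/r) ∑ᵢ T_{sᵢ}` (a symmetric linear combination of the generators, `r` the
number of generators).  Then for all `N ≥ 0` and all `x`, the coefficient of `T_x`
in `ξ^N` equals the coefficient of `T_{x⁻¹}` in `ξ^N`. -/
theorem hecke_power_coeff_symm {B W K : Type*} [Group W] [Ring K] [Module ℚ K]
    [Fintype B] (M : CoxeterMatrix B) (cs : CoxeterSystem M W)
    (T : W → K) (b : Module.Basis W ℚ K) (hbT : ∀ x, (b x : K) = T x)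
    (hT1 : T 1 = 1)
    (hleft : ∀ (i : B) (x : W), cs.length (cs.simple i * x) > cs.length x →
      T (cs.simple i) * T x = T (cs.simple i * x))
    (hleft' : ∀ (i : B) (x : W), ¬ cs.length (cs.simple i * x) > cs.length x →
      T (cs.simple i) * T x = T x)
    (hright : ∀ (i : B) (x : W), cs.length (x * cs.simple i) > cs.length x →
      T x * T (cs.simple i) = T (x * cs.simple i))
    (hright' : ∀ (i : B) (x : W), ¬ cs.length (x * cs.simple i) > cs.length x →
      T x * T (cs.simple i) = T x)
    (ξ : K) (hξ : ξ = (1 / (Fintype.card B : ℚ)) • ∑ i : B, T (cs.simple i)) :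
    ∀ (N : ℕ) (x : W), b.repr (ξ ^ N) x = b.repr (ξ ^ N) x⁻¹ := by
  obtain rfl : ⇑b = T := funext hbT
  have hmul : ∀ a, b.invMap (a * ξ) = ξ * b.invMap a := fun a => by
    simp only [hξ, mul_smul_comm, smul_mul_assoc, Finset.mul_sum, Finset.sum_mul, map_sum,
      map_smul, cs.invMap_mul_simple b hleft hleft' hright hright']
  have hone : b.invMap 1 = 1 := by
    rw [← hT1, Module.Basis.invMap_self, inv_one]
  intro N x
  rw [← b.repr_invMap_apply, apply_pow_eq_pow_of_apply_mul _ ξ hone hmul]
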